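/- arXiv:1810.11640 — 2 statements merged into one kernel-verified Lean document; each statement's English description precedes it below -/
import Mathlib

section
/- Let C ⊆ ℝⁿ be a nonempty closed convex set, θ ≥ 0, x ∈ C, and y ∈ ℝⁿ. For any x̃ ∈ C, ỹ ∈ ℝⁿ, and any w ∈ P_C(y, x, θ), we have ‖w − P_C(ỹ)‖ ≤ ‖y − ỹ‖ + √(2θ)·‖y − x‖, where P_C(ỹ) denotes the exact projection of ỹ onto C. -/
/-!
Testing the inexact variational inequality for `w` at `w̃` and the exact one for `w̃` at `w`
and adding them gives `‖w - w̃‖² ≤ ⟪y - ỹ, w - w̃⟫ + θ‖y - x‖²`; Cauchy–Schwarz turns this into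
`a² ≤ a b + c²` for `a = ‖w - w̃‖`, `b = ‖y - ỹ‖`, `c = √(2θ) ‖y - x‖`, which forces `a ≤ b + c`.
-/

open RealInnerProductSpace

/-- The feasible inexact projection set `P_C(y, x, θ)`. -/
def inexProj {n : ℕ} (C : Set (EuclideanSpace ℝ (Fin n))) (y x : EuclideanSpace ℝ (Fin n))
    (θ : ℝ) : Set (EuclideanSpace ℝ (Fin n)) :=
  {w ∈ C | ∀ z ∈ C, ⟪y - w, z - w⟫ ≤ θ * ‖y - x‖ ^ 2}

theorem le_add_of_sq_le_mul_add_sq {a b c : ℝ} (hb : 0 ≤ b) (hc : 0 ≤ c)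
    (h : a ^ 2 ≤ a * b + c ^ 2) : a ≤ b + c := by
  by_contra! hlt
  nlinarith

theorem norm_sub_sq_le_of_inner_le {E : Type*} [NormedAddCommGroup E] [InnerProductSpace ℝ E]
    {y y' w w' : E} {ε ε' : ℝ} (h : ⟪y - w, w' - w⟫ ≤ ε) (h' : ⟪y' - w', w - w'⟫ ≤ ε') :
    ‖w - w'‖ ^ 2 ≤ ‖y - y'‖ * ‖w - w'‖ + (ε + ε') := by
  have hsplit : ‖w - w'‖ ^ 2 = ⟪y - y', w - w'⟫ + ⟪y - w, w' - w⟫ + ⟪y' - w', w - w'⟫ := by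
    rw [← real_inner_self_eq_norm_sq]
    simp only [inner_sub_left, inner_sub_right]
    ring
  linarith [real_inner_le_norm (y - y') (w - w')]

theorem inexProj_dist_exactProj_general {n : ℕ} (C : Set (EuclideanSpace ℝ (Fin n)))
    (θ : ℝ) (x : EuclideanSpace ℝ (Fin n))
    (y ytil : EuclideanSpace ℝ (Fin n))
    (w : EuclideanSpace ℝ (Fin n)) (hw : w ∈ inexProj C y x θ)
    (wtil : EuclideanSpace ℝ (Fin n)) (hwtilC : wtil ∈ C)
    (hwtil : ∀ z ∈ C, ⟪ytil - wtil, z - wtil⟫ ≤ 0) :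
    ‖w - wtil‖ ≤ ‖y - ytil‖ + Real.sqrt (2 * θ) * ‖y - x‖ := by
  have hquad := norm_sub_sq_le_of_inner_le (hw.2 wtil hwtilC) (hwtil w hw.1)
  have hslack : θ * ‖y - x‖ ^ 2 ≤ (Real.sqrt (2 * θ) * ‖y - x‖) ^ 2 := by
    rw [mul_pow, Real.sq_sqrt']
    gcongr
    linarith [le_max_left (2 * θ) 0, le_max_right (2 * θ) 0]
  refine le_add_of_sq_le_mul_add_sq (norm_nonneg _) (by positivity) ?_
  linarith [mul_comm ‖w - wtil‖ ‖y - ytil‖]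

/-- Stability of feasible inexact projections relative to the exact projection. -/
theorem inexProj_dist_exactProj {n : ℕ} (C : Set (EuclideanSpace ℝ (Fin n)))
    (hCne : C.Nonempty) (hCc : IsClosed C) (hCcv : Convex ℝ C)
    (θ : ℝ) (hθ : 0 ≤ θ) (x : EuclideanSpace ℝ (Fin n)) (hx : x ∈ C)
    (y ytil : EuclideanSpace ℝ (Fin n)) (xtil : EuclideanSpace ℝ (Fin n)) (hxtil : xtil ∈ C)
    (w : EuclideanSpace ℝ (Fin n)) (hw : w ∈ inexProj C y x θ)
    (wtil : EuclideanSpace ℝ (Fin n)) (hwtilC : wtil ∈ C)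
    (hwtil : ∀ z ∈ C, ⟪ytil - wtil, z - wtil⟫ ≤ 0) :
    ‖w - wtil‖ ≤ ‖y - ytil‖ + Real.sqrt (2 * θ) * ‖y - x‖ :=
  inexProj_dist_exactProj_general C θ x y ytil w hw wtil hwtilC hwtil
end

section
/- Let C ⊆ ℝⁿ be a nonempty closed convex set, x̄ ∈ C, x₀ ∈ C, y₀ ∈ ℝⁿ, θ₀ ≥ 0, and x₁ ∈ P_C(y₀, x₀, θ₀). Then ‖x₁ − x̄‖ ≤ (1 + √(2θ₀))‖y₀ − x̄‖ + √(2θ₀)‖x₀ − x̄‖. -/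
/-!
Expanding `x₁ - x̄ = (y₀ - x̄) - (y₀ - x₁)` gives
`‖x₁ - x̄‖² = ‖y₀ - x̄‖² - ‖y₀ - x₁‖² + 2⟪y₀ - x₁, x̄ - x₁⟫`, and the defining inequality of
`P_C(y₀, x₀, θ₀)` at `z = x̄` bounds the inner product by `θ₀‖y₀ - x₀‖²`. Hence
`‖x₁ - x̄‖ ≤ ‖y₀ - x̄‖ + √(2θ₀)‖y₀ - x₀‖`, and the triangle inequality through `x̄` finishes.
-/

open RealInnerProductSpace

section InnerProductSpace

variable {E : Type*} [NormedAddCommGroup E] [InnerProductSpace ℝ E]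

theorem norm_sub_sq_eq_sub_add_inner (y w p : E) :
    ‖w - p‖ ^ 2 = ‖y - p‖ ^ 2 - ‖y - w‖ ^ 2 + 2 * ⟪y - w, p - w⟫ := by
  have hexpand := norm_sub_sq_real (y - w) (p - w)
  rw [sub_sub_sub_cancel_right, norm_sub_rev p w] at hexpand
  linarith

theorem norm_sub_le_of_inner_le {y w p : E} {ε : ℝ} (h : ⟪y - w, p - w⟫ ≤ ε) :
    ‖w - p‖ ≤ ‖y - p‖ + √(2 * ε) := by
  have hsq : ‖w - p‖ ^ 2 ≤ (‖y - p‖ + √(2 * ε)) ^ 2 := by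
    -- for `ε < 0` the junk value `√(2ε) = 0` still works, as then `2ε < 0`
    have hε : 2 * ε ≤ √(2 * ε) ^ 2 := by rw [Real.sq_sqrt']; exact le_max_left _ _
    have := norm_sub_sq_eq_sub_add_inner y w p
    nlinarith [sq_nonneg ‖y - w‖, norm_nonneg (y - p), Real.sqrt_nonneg (2 * ε)]
  exact (pow_le_pow_iff_left₀ (norm_nonneg _) (by positivity) two_ne_zero).1 hsq

end InnerProductSpace

theorem norm_sub_le_of_mem_inexProj {n : ℕ} {C : Set (EuclideanSpace ℝ (Fin n))}
    {y x w p : EuclideanSpace ℝ (Fin n)} {θ : ℝ} (hw : w ∈ inexProj C y x θ) (hp : p ∈ C) :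
    ‖w - p‖ ≤ ‖y - p‖ + √(2 * θ) * ‖y - x‖ := by
  have h := norm_sub_le_of_inner_le (hw.2 p hp)
  rwa [← mul_assoc, Real.sqrt_mul' _ (sq_nonneg _), Real.sqrt_sq (norm_nonneg _)] at h

theorem inexProj_dist_to_point_general {n : ℕ} (C : Set (EuclideanSpace ℝ (Fin n)))
    (xbar : EuclideanSpace ℝ (Fin n)) (hxbar : xbar ∈ C)
    (x₀ : EuclideanSpace ℝ (Fin n))
    (y₀ : EuclideanSpace ℝ (Fin n)) (θ₀ : ℝ)
    (x₁ : EuclideanSpace ℝ (Fin n)) (hx₁ : x₁ ∈ inexProj C y₀ x₀ θ₀) :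
    ‖x₁ - xbar‖ ≤ (1 + Real.sqrt (2 * θ₀)) * ‖y₀ - xbar‖
        + Real.sqrt (2 * θ₀) * ‖x₀ - xbar‖ := by
  have htri : ‖y₀ - x₀‖ ≤ ‖y₀ - xbar‖ + ‖x₀ - xbar‖ := by
    simpa only [norm_sub_rev xbar x₀] using norm_sub_le_norm_sub_add_norm_sub y₀ xbar x₀
  calc ‖x₁ - xbar‖ ≤ ‖y₀ - xbar‖ + √(2 * θ₀) * ‖y₀ - x₀‖ :=
        norm_sub_le_of_mem_inexProj hx₁ hxbar
    _ ≤ ‖y₀ - xbar‖ + √(2 * θ₀) * (‖y₀ - xbar‖ + ‖x₀ - xbar‖) := by gcongr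
    _ = (1 + √(2 * θ₀)) * ‖y₀ - xbar‖ + √(2 * θ₀) * ‖x₀ - xbar‖ := by ring

/-- Bound on the distance of a feasible inexact projection to a point of `C`. -/
theorem inexProj_dist_to_point {n : ℕ} (C : Set (EuclideanSpace ℝ (Fin n)))
    (hCne : C.Nonempty) (hCc : IsClosed C) (hCcv : Convex ℝ C)
    (xbar : EuclideanSpace ℝ (Fin n)) (hxbar : xbar ∈ C)
    (x₀ : EuclideanSpace ℝ (Fin n)) (hx₀ : x₀ ∈ C)
    (y₀ : EuclideanSpace ℝ (Fin n)) (θ₀ : ℝ) (hθ₀ : 0 ≤ θ₀)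
    (x₁ : EuclideanSpace ℝ (Fin n)) (hx₁ : x₁ ∈ inexProj C y₀ x₀ θ₀) :
    ‖x₁ - xbar‖ ≤ (1 + Real.sqrt (2 * θ₀)) * ‖y₀ - xbar‖
        + Real.sqrt (2 * θ₀) * ‖x₀ - xbar‖ :=
  inexProj_dist_to_point_general C xbar hxbar x₀ y₀ θ₀ x₁ hx₁
end
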